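/- arXiv:2111.03312 — 3 statements merged into one kernel-verified Lean document; each statement's English description precedes it below -/
import Mathlib

section
/- Let β, α0, α1, α2, α3 > 0 and let L(H,V) = βH/(α0 + α1 H + α2 V + α3 H V) for H, V ≥ 0. Then for all H1, H2, V1, V2 ∈ [0, ∞) with H1, H2 ≤ Hm and V1, V2 ≤ Vm, one has |L(H1,V1)V1 − L(H2,V2)V2| ≤ β(1/α2 + Vm/α0)|H1 − H2| + β(1/α1 + Hm/α0)|V1 − V2|. -/
set_option maxHeartbeats 1000000 in
theorem stmt0 (β a0 a1 a2 a3 Hm Vm : ℝ)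
    (hβ : 0 < β) (h0 : 0 < a0) (h1 : 0 < a1) (h2 : 0 < a2) (h3 : 0 < a3)
    (L : ℝ → ℝ → ℝ)
    (hL : ∀ H V, 0 ≤ H → 0 ≤ V → L H V = β * H / (a0 + a1 * H + a2 * V + a3 * H * V))
    (H1 H2 V1 V2 : ℝ) (hH1 : 0 ≤ H1) (hH2 : 0 ≤ H2) (hV1 : 0 ≤ V1) (hV2 : 0 ≤ V2)
    (hH1m : H1 ≤ Hm) (hH2m : H2 ≤ Hm) (hV1m : V1 ≤ Vm) (hV2m : V2 ≤ Vm) :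
    |L H1 V1 * V1 - L H2 V2 * V2| ≤
      β * (1 / a2 + Vm / a0) * |H1 - H2| + β * (1 / a1 + Hm / a0) * |V1 - V2| := by
  set D1 := a0 + a1 * H1 + a2 * V1 + a3 * H1 * V1 with hD1
  set D2 := a0 + a1 * H2 + a2 * V2 + a3 * H2 * V2 with hD2
  have hD1pos : 0 < D1 := by positivity
  have hD2pos : 0 < D2 := by positivity
  rw [hL H1 V1 hH1 hV1, hL H2 V2 hH2 hV2]
  have hVm : 0 ≤ Vm := le_trans hV1 hV1m
  have hHm : 0 ≤ Hm := le_trans hH1 hH1m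
  have key : β * H1 / D1 * V1 - β * H2 / D2 * V2 =
      β * ((a0 * V1 + a2 * V1 * V2) * (H1 - H2) +
        (a0 * H2 + a1 * H1 * H2) * (V1 - V2)) / (D1 * D2) := by
    field_simp
    ring
  rw [key]
  have hprod : 0 < D1 * D2 := mul_pos hD1pos hD2pos
  rw [abs_div, abs_of_pos hprod, div_le_iff₀ hprod]
  have habs : |β * ((a0 * V1 + a2 * V1 * V2) * (H1 - H2) +
        (a0 * H2 + a1 * H1 * H2) * (V1 - V2))| ≤
      β * ((a0 * V1 + a2 * V1 * V2) * |H1 - H2| +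
        (a0 * H2 + a1 * H1 * H2) * |V1 - V2|) := by
    rw [abs_mul, abs_of_pos hβ]
    gcongr
    calc |(a0 * V1 + a2 * V1 * V2) * (H1 - H2) + (a0 * H2 + a1 * H1 * H2) * (V1 - V2)|
        ≤ |(a0 * V1 + a2 * V1 * V2) * (H1 - H2)| + |(a0 * H2 + a1 * H1 * H2) * (V1 - V2)| :=
          abs_add_le _ _
      _ = _ := by
          rw [abs_mul, abs_mul,
            abs_of_nonneg (show (0:ℝ) ≤ a0 * V1 + a2 * V1 * V2 by positivity),
            abs_of_nonneg (show (0:ℝ) ≤ a0 * H2 + a1 * H1 * H2 by positivity)]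
  -- lower bounds on the product of denominators
  have hA : a2 * V1 ≤ D1 := by nlinarith [mul_nonneg hH1 hV1]
  have hB : (a0 : ℝ) ≤ D2 := by nlinarith [mul_nonneg hH2 hV2]
  have hA' : (a0 : ℝ) ≤ D1 := by nlinarith [mul_nonneg hH1 hV1]
  have hB' : a1 * H2 ≤ D2 := by nlinarith [mul_nonneg hH2 hV2]
  clear_value D1 D2
  have hb1 : a2 * V1 * a0 ≤ D1 * D2 :=
    mul_le_mul hA hB h0.le hD1pos.le
  have hb2 : a0 * (a1 * H2) ≤ D1 * D2 :=
    mul_le_mul hA' hB' (by positivity) hD1pos.le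
  have hc1 : a0 * V1 + a2 * V1 * V2 ≤ (1 / a2 + Vm / a0) * (D1 * D2) := by
    rw [div_add_div _ _ (ne_of_gt h2) (ne_of_gt h0), div_mul_eq_mul_div,
      le_div_iff₀ (by positivity)]
    have e2 : a2 * V2 * (a2 * V1 * a0) ≤ a2 * Vm * (D1 * D2) :=
      mul_le_mul (by nlinarith) hb1 (by positivity) (by positivity)
    nlinarith [mul_le_mul_of_nonneg_left hb1 h0.le]
  have hc2 : a0 * H2 + a1 * H1 * H2 ≤ (1 / a1 + Hm / a0) * (D1 * D2) := by
    rw [div_add_div _ _ (ne_of_gt h1) (ne_of_gt h0), div_mul_eq_mul_div,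
      le_div_iff₀ (by positivity)]
    have e2 : a1 * H1 * (a0 * (a1 * H2)) ≤ a1 * Hm * (D1 * D2) :=
      mul_le_mul (by nlinarith) hb2 (by positivity) (by positivity)
    nlinarith [mul_le_mul_of_nonneg_left hb2 h0.le]
  calc |β * ((a0 * V1 + a2 * V1 * V2) * (H1 - H2) + (a0 * H2 + a1 * H1 * H2) * (V1 - V2))|
      ≤ β * ((a0 * V1 + a2 * V1 * V2) * |H1 - H2| +
          (a0 * H2 + a1 * H1 * H2) * |V1 - V2|) := habs
    _ ≤ β * (((1 / a2 + Vm / a0) * (D1 * D2)) * |H1 - H2| +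
          ((1 / a1 + Hm / a0) * (D1 * D2)) * |V1 - V2|) := by
        gcongr
    _ = (β * (1 / a2 + Vm / a0) * |H1 - H2| + β * (1 / a1 + Hm / a0) * |V1 - V2|) * (D1 * D2) := by
        ring
end

section
/- With parameters as above and γ = (1−ε)k − u(α+ρ), let ψ(x) = (1−η)γ L(x, z(x)) − (α+ρ)μ where L(x,v) = βx/(α0 + α1 x + α2 v + α3 x v) and z(x) = γ(λ − dx)/(μα). Then ψ(0) = −(α+ρ)μ < 0, and if γ > 0 then ψ is strictly increasing on (0, λ/d); consequently, if in addition R0 > 1 then ψ has a unique zero H* in (0, λ/d). -/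
/-!
On `[0, λ/d]` the treatment term `z` is a nonnegative, nonincreasing affine function of `x`, and
for such a `v` the Hattaf–Yousfi ratio `β x / (α₀ + α₁ x + α₂ v + α₃ x v)` is strictly increasing
in `x` (cross-multiplying, every term of the denominator grows no faster than `x`). Hence `ψ` is
strictly increasing and continuous on `[0, λ/d]`, with `ψ 0 < 0`. At `x = λ/d` the term `z`
vanishes and `0 < ψ (λ/d)` is `1 < R₀` with the denominators cleared, so the intermediate value
theorem gives a zero, which strict monotonicity makes unique.
-/

open Set

theorem existsUnique_mem_Ioo_eq_zero_of_strictMonoOn {f : ℝ → ℝ} {a b : ℝ} (hab : a ≤ b)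
    (hf : ContinuousOn f (Icc a b)) (hmono : StrictMonoOn f (Icc a b))
    (ha : f a < 0) (hb : 0 < f b) : ∃! x, x ∈ Ioo a b ∧ f x = 0 := by
  obtain ⟨x, hx, hfx⟩ := intermediate_value_Ioo hab hf ⟨ha, hb⟩
  refine ⟨x, ⟨hx, hfx⟩, fun y ⟨hy, hfy⟩ => ?_⟩
  exact hmono.injOn (Ioo_subset_Icc_self hy) (Ioo_subset_Icc_self hx) (hfy.trans hfx.symm)

section HattafYousfi

variable {β a0 a1 a2 a3 : ℝ}

theorem hattafYousfi_denom_pos (ha0 : 0 < a0) (ha1 : 0 ≤ a1) (ha2 : 0 ≤ a2) (ha3 : 0 ≤ a3)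
    {x v : ℝ} (hx : 0 ≤ x) (hv : 0 ≤ v) : 0 < a0 + a1 * x + a2 * v + a3 * x * v := by
  positivity

theorem strictMonoOn_hattafYousfi {s : Set ℝ} {v : ℝ → ℝ} (hβ : 0 < β)
    (ha0 : 0 < a0) (ha1 : 0 ≤ a1) (ha2 : 0 ≤ a2) (ha3 : 0 ≤ a3)
    (hs : s ⊆ Ici 0) (hv : AntitoneOn v s) (hv0 : ∀ x ∈ s, 0 ≤ v x) :
    StrictMonoOn (fun x => β * x / (a0 + a1 * x + a2 * v x + a3 * x * v x)) s := by
  intro x hx y hy hxy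
  have hx0 : 0 ≤ x := hs hx
  have hvxy : v y ≤ v x := hv hx hy hxy.le
  have hvy0 := hv0 y hy
  simp only
  rw [div_lt_div_iff₀ (hattafYousfi_denom_pos ha0 ha1 ha2 ha3 hx0 (hv0 x hx))
    (hattafYousfi_denom_pos ha0 ha1 ha2 ha3 (hx0.trans hxy.le) hvy0)]
  have hcross : x * v y ≤ y * v x :=
    (mul_le_mul_of_nonneg_left hvxy hx0).trans (mul_le_mul_of_nonneg_right hxy.le (hv0 x hx))
  have hkey : x * (a0 + a1 * y + a2 * v y + a3 * y * v y) <
      y * (a0 + a1 * x + a2 * v x + a3 * x * v x) := by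
    nlinarith [mul_le_mul_of_nonneg_left hcross ha2,
      mul_le_mul_of_nonneg_left hvxy (mul_nonneg ha3 (mul_nonneg hx0 (hx0.trans hxy.le)))]
  linarith [mul_lt_mul_of_pos_left hkey hβ]

theorem continuousOn_hattafYousfi {s : Set ℝ} {v : ℝ → ℝ}
    (ha0 : 0 < a0) (ha1 : 0 ≤ a1) (ha2 : 0 ≤ a2) (ha3 : 0 ≤ a3)
    (hs : s ⊆ Ici 0) (hv : ContinuousOn v s) (hv0 : ∀ x ∈ s, 0 ≤ v x) :
    ContinuousOn (fun x => β * x / (a0 + a1 * x + a2 * v x + a3 * x * v x)) s :=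
  ContinuousOn.div (by fun_prop) (by fun_prop) fun x hx =>
    (hattafYousfi_denom_pos ha0 ha1 ha2 ha3 (hs hx) (hv0 x hx)).ne'

end HattafYousfi

theorem lt_mul_div_of_one_lt_R0 {α ρ μ β k η ε u D Λ : ℝ} (hαρ : 0 < α + ρ) (hμ : 0 < μ)
    (hD : 0 < D) (hβ : 0 ≤ β) (hΛ : 0 ≤ Λ) (hη1 : η < 1) (hu : 0 ≤ u)
    (h : 1 < (1 - η) * (1 - ε) * k * β * Λ / ((α + ρ) * (μ * D + u * (1 - η) * β * Λ))) :
    (α + ρ) * μ < (1 - η) * ((1 - ε) * k - u * (α + ρ)) * (β * Λ / D) := by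
  have hC : 0 ≤ u * (1 - η) * β * Λ := by
    have := sub_pos.2 hη1
    positivity
  rw [one_lt_div (by positivity)] at h
  rw [← mul_div_assoc, lt_div_iff₀ hD]
  linarith

theorem stmt5_general (lam d β α ρ μ k a0 a1 a2 a3 η ε u : ℝ)
    (hlam : 0 < lam) (hd : 0 < d) (hβ : 0 < β) (hα : 0 < α) (hρ : 0 < ρ)
    (hμ : 0 < μ) (ha0 : 0 < a0)
    (ha1 : 0 ≤ a1) (ha2 : 0 ≤ a2) (ha3 : 0 ≤ a3)
    (hη1 : η < 1)
    (hu : u = 0 ∨ u = 1)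
    (γ R0 : ℝ) (hγ : γ = (1 - ε) * k - u * (α + ρ))
    (hR0 : R0 = (1 - η) * (1 - ε) * k * β * (lam / d) /
        ((α + ρ) * (μ * (a0 + a1 * (lam / d)) + u * (1 - η) * β * (lam / d))))
    (L : ℝ → ℝ → ℝ)
    (hL : ∀ x v, L x v = β * x / (a0 + a1 * x + a2 * v + a3 * x * v))
    (z ψ : ℝ → ℝ)
    (hz : ∀ x, z x = γ * (lam - d * x) / (μ * α))
    (hψ : ∀ x, ψ x = (1 - η) * γ * L x (z x) - (α + ρ) * μ) :
    ψ 0 = -((α + ρ) * μ) ∧ ψ 0 < 0 ∧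
    (0 < γ → StrictMonoOn ψ (Set.Ioo 0 (lam / d))) ∧
    (0 < γ → 1 < R0 → ∃! Hs, Hs ∈ Set.Ioo 0 (lam / d) ∧ ψ Hs = 0) := by
  have hΛ : 0 < lam / d := by positivity
  have hαρμ : 0 < (α + ρ) * μ := by positivity
  have hψ0 : ψ 0 = -((α + ρ) * μ) := by simp [hψ, hL]
  have hψ_eq : ψ = fun x =>
      (1 - η) * γ * (β * x / (a0 + a1 * x + a2 * z x + a3 * x * z x)) - (α + ρ) * μ :=
    funext fun x => by rw [hψ, hL]
  have hz_anti (hγ0 : 0 ≤ γ) : Antitone z := by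
    intro x y hxy
    rw [hz, hz]
    gcongr
  have hz_nonneg (hγ0 : 0 ≤ γ) (x : ℝ) (hx : x ∈ Icc 0 (lam / d)) : 0 ≤ z x := by
    have : x * d ≤ lam := (le_div_iff₀ hd).1 hx.2
    rw [hz]
    exact div_nonneg (mul_nonneg hγ0 (by linarith)) (by positivity)
  have hmono (hγ0 : 0 < γ) : StrictMonoOn ψ (Icc 0 (lam / d)) := by
    have hHY := strictMonoOn_hattafYousfi hβ ha0 ha1 ha2 ha3 (fun x hx => hx.1)
      ((hz_anti hγ0.le).antitoneOn _) (hz_nonneg hγ0.le)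
    have hc : 0 < (1 - η) * γ := mul_pos (by linarith) hγ0
    rw [hψ_eq]
    exact fun x hx y hy hxy => sub_lt_sub_right (mul_lt_mul_of_pos_left (hHY hx hy hxy) hc) _
  refine ⟨hψ0, hψ0 ▸ neg_neg_of_pos hαρμ, fun hγ0 => (hmono hγ0).mono Ioo_subset_Icc_self,
    fun hγ0 hR => ?_⟩
  have hcont : ContinuousOn ψ (Icc 0 (lam / d)) := by
    have hz_cont : Continuous z := by rw [funext hz]; fun_prop
    rw [hψ_eq]
    exact (continuousOn_const.mul (continuousOn_hattafYousfi ha0 ha1 ha2 ha3 (fun x hx => hx.1)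
      hz_cont.continuousOn (hz_nonneg hγ0.le))).sub continuousOn_const
  have hψΛ : 0 < ψ (lam / d) := by
    have hzΛ : z (lam / d) = 0 := by rw [hz]; field_simp; ring
    rw [hψ_eq]
    simp only [hzΛ, mul_zero, add_zero, sub_pos, hγ]
    rw [hR0] at hR
    exact lt_mul_div_of_one_lt_R0 (by positivity) hμ (by positivity) hβ.le hΛ.le hη1
      (by rcases hu with rfl | rfl <;> norm_num) hR
  exact existsUnique_mem_Ioo_eq_zero_of_strictMonoOn hΛ.le hcont (hmono hγ0)
    (by linarith) hψΛ

theorem stmt5 (lam d β α ρ μ k a0 a1 a2 a3 η ε u : ℝ)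
    (hlam : 0 < lam) (hd : 0 < d) (hβ : 0 < β) (hα : 0 < α) (hρ : 0 < ρ)
    (hμ : 0 < μ) (hk : 0 < k) (ha0 : 0 < a0)
    (ha1 : 0 ≤ a1) (ha2 : 0 ≤ a2) (ha3 : 0 ≤ a3)
    (hη0 : 0 ≤ η) (hη1 : η < 1) (hε0 : 0 ≤ ε) (hε1 : ε < 1)
    (hu : u = 0 ∨ u = 1)
    (γ R0 : ℝ) (hγ : γ = (1 - ε) * k - u * (α + ρ))
    (hR0 : R0 = (1 - η) * (1 - ε) * k * β * (lam / d) /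
        ((α + ρ) * (μ * (a0 + a1 * (lam / d)) + u * (1 - η) * β * (lam / d))))
    (L : ℝ → ℝ → ℝ)
    (hL : ∀ x v, L x v = β * x / (a0 + a1 * x + a2 * v + a3 * x * v))
    (z ψ : ℝ → ℝ)
    (hz : ∀ x, z x = γ * (lam - d * x) / (μ * α))
    (hψ : ∀ x, ψ x = (1 - η) * γ * L x (z x) - (α + ρ) * μ) :
    ψ 0 = -((α + ρ) * μ) ∧ ψ 0 < 0 ∧
    (0 < γ → StrictMonoOn ψ (Set.Ioo 0 (lam / d))) ∧
    (0 < γ → 1 < R0 → ∃! Hs, Hs ∈ Set.Ioo 0 (lam / d) ∧ ψ Hs = 0) :=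
  stmt5_general lam d β α ρ μ k a0 a1 a2 a3 η ε u hlam hd hβ hα hρ hμ ha0 ha1 ha2 ha3 hη1 hu γ R0 hγ
    hR0 L hL z ψ hz hψ
end

section
/- Suppose 0 < H ≤ Λ and I, V ≥ 0, with all model parameters positive, 0 ≤ η, ε < 1, u ∈ {0,1}, and τ0 = (1−ε)k(1−η)βΛ/(μ α0 (α+ρ)). Then along G1 = ((1−ε)k/(α+ρ))·I + V, the expression ((1−ε)k/(α+ρ))·((1−η)βHV/(α0+α1H+α2V+α3HV) − (α+ρ)I) + ((1−ε)kI − μV − u(1−η)βHV/(α0+α1H+α2V+α3HV)) is at most (τ0 − 1)μV. -/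
theorem stmt13 (lam d β α ρ μ k a0 a1 a2 a3 η ε u : ℝ)
    (hlam : 0 < lam) (hd : 0 < d) (hβ : 0 < β) (hα : 0 < α) (hρ : 0 < ρ)
    (hμ : 0 < μ) (hk : 0 < k) (ha0 : 0 < a0)
    (ha1 : 0 ≤ a1) (ha2 : 0 ≤ a2) (ha3 : 0 ≤ a3)
    (hη0 : 0 ≤ η) (hη1 : η < 1) (hε0 : 0 ≤ ε) (hε1 : ε < 1)
    (hu : u = 0 ∨ u = 1)
    (Λ τ0 : ℝ) (hΛ : Λ = lam / d)
    (hτ0 : τ0 = (1 - ε) * k * (1 - η) * β * Λ / (μ * a0 * (α + ρ)))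
    (H I V : ℝ) (hH : 0 < H) (hHΛ : H ≤ Λ) (hI : 0 ≤ I) (hV : 0 ≤ V) :
    ((1 - ε) * k / (α + ρ)) *
        ((1 - η) * β * H * V / (a0 + a1 * H + a2 * V + a3 * H * V) - (α + ρ) * I)
      + ((1 - ε) * k * I - μ * V
          - u * (1 - η) * β * H * V / (a0 + a1 * H + a2 * V + a3 * H * V))
      ≤ (τ0 - 1) * μ * V := by
  have hu0 : 0 ≤ u := by rcases hu with h | h <;> simp [h]
  have hD : 0 < a0 + a1 * H + a2 * V + a3 * H * V := by
    have h1 : 0 ≤ a1 * H := mul_nonneg ha1 hH.le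
    have h2 : 0 ≤ a2 * V := mul_nonneg ha2 hV
    have h3 : 0 ≤ a3 * H * V := mul_nonneg (mul_nonneg ha3 hH.le) hV
    linarith
  have hαρ : 0 < α + ρ := by linarith
  have hη' : 0 < 1 - η := by linarith
  have hε' : 0 < 1 - ε := by linarith
  have hΛ0 : 0 < Λ := lt_of_lt_of_le hH hHΛ
  -- key: H*V/D ≤ Λ*V/a0
  have key : H * V / (a0 + a1 * H + a2 * V + a3 * H * V) ≤ Λ * V / a0 := by
    rw [div_le_div_iff₀ hD ha0]
    nlinarith [mul_nonneg (mul_nonneg ha1 hH.le) hV, mul_nonneg (mul_nonneg ha2 hV) hV,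
      mul_nonneg (mul_nonneg (mul_nonneg ha3 hH.le) hV) hV,
      mul_nonneg (mul_nonneg ha1 (sub_nonneg.mpr hHΛ)) hV,
      mul_nonneg (mul_nonneg ha2 (sub_nonneg.mpr hHΛ)) (mul_nonneg hV hV),
      mul_nonneg (mul_nonneg (mul_nonneg ha3 hH.le) (sub_nonneg.mpr hHΛ)) (mul_nonneg hV hV),
      mul_le_mul_of_nonneg_right hHΛ (mul_nonneg hV ha0.le)]
  have hu_term : 0 ≤ u * (1 - η) * β * H * V / (a0 + a1 * H + a2 * V + a3 * H * V) := by
    apply div_nonneg _ hD.le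
    positivity
  have hc : 0 ≤ (1 - ε) * k / (α + ρ) * ((1 - η) * β) := by positivity
  have key2 : (1 - ε) * k / (α + ρ) * ((1 - η) * β) * (H * V / (a0 + a1 * H + a2 * V + a3 * H * V))
      ≤ (1 - ε) * k / (α + ρ) * ((1 - η) * β) * (Λ * V / a0) :=
    mul_le_mul_of_nonneg_left key hc
  have hrhs : (τ0 - 1) * μ * V = (1 - ε) * k / (α + ρ) * ((1 - η) * β) * (Λ * V / a0) - μ * V := by
    rw [hτ0]; field_simp
  rw [hrhs]
  have hlhs : ((1 - ε) * k / (α + ρ)) *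
        ((1 - η) * β * H * V / (a0 + a1 * H + a2 * V + a3 * H * V) - (α + ρ) * I)
      + ((1 - ε) * k * I - μ * V
          - u * (1 - η) * β * H * V / (a0 + a1 * H + a2 * V + a3 * H * V))
      = (1 - ε) * k / (α + ρ) * ((1 - η) * β) * (H * V / (a0 + a1 * H + a2 * V + a3 * H * V))
        - μ * V - u * (1 - η) * β * H * V / (a0 + a1 * H + a2 * V + a3 * H * V) := by
    field_simp
    ring
  rw [hlhs]
  linarith
end
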